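/- arXiv:2311.15699 — 2 statements merged into one kernel-verified Lean document; each statement's English description precedes it below -/
import Mathlib

section
/- Let y = (b, a, a, ..., a) ∈ ℕ^n with n ≥ 2 (first car has length b, the remaining n−1 cars have length a), and let x ∈ [m]^n where m = b + (n−1)a. If b > (n−1)a, then x ∈ PAinv_n(y) if and only if for every i ∈ [n], the i-th smallest entry x_{(i)} belongs to {1 + (k−1)a : k ∈ [i]}. -/
/-- Car with preference `pref` and length `len` fits at spot `s`:
`pref ≤ s`, the spots `s, s+1, ..., s+len-1` all lie in the lot `[1, m]`,
and none of them is occupied. -/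
def FitsAt (occ : Finset ℕ) (m pref len s : ℕ) : Prop :=
  pref ≤ s ∧ s + len ≤ m + 1 ∧ ∀ t ∈ Finset.Ico s (s + len), t ∉ occ

/-- The car parks at `s`: `s` is the least spot (≥ its preference) where it fits. -/
def ParksAt (occ : Finset ℕ) (m pref len s : ℕ) : Prop :=
  FitsAt occ m pref len s ∧ ∀ s' < s, ¬ FitsAt occ m pref len s'

/-- Every car in the list of (preference, length) pairs can park, with
cars entering in order, starting from the set `occ` of occupied spots. -/
inductive Park (m : ℕ) : Finset ℕ → List (ℕ × ℕ) → Prop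
  | nil (occ : Finset ℕ) : Park m occ []
  | cons (occ : Finset ℕ) (pref len : ℕ) (rest : List (ℕ × ℕ)) (s : ℕ) :
      ParksAt occ m pref len s →
      Park m (occ ∪ Finset.Ico s (s + len)) rest →
      Park m occ ((pref, len) :: rest)

/-- `x` is a parking assortment for the length vector `y`. -/
def PA (y x : List ℕ) : Prop :=
  x.length = y.length ∧ (∀ v ∈ x, 1 ≤ v ∧ v ≤ y.sum) ∧ Park y.sum ∅ (x.zip y)

/-- `x` is a (permutation) invariant parking assortment for `y`. -/
def PAinv (y x : List ℕ) : Prop :=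
  ∀ x' : List ℕ, x.Perm x' → PA y x'

/-- The degree of `x`: the number of entries of `x` different from 1. -/
def deg (x : List ℕ) : ℕ := (x.filter (fun v => v ≠ 1)).length

/-- The characteristic of `y`: the greatest degree over all invariant
parking assortments for `y`. -/
noncomputable def chi (y : List ℕ) : ℕ := sSup {d | ∃ x, PAinv y x ∧ deg x = d}

/-- The invariant solution set of `y`. -/
def Wset (y : List ℕ) : Set ℕ :=
  {w | PAinv y (List.replicate (y.length - 1) 1 ++ [w])}

/-!
Write `c u = 1 + u * a`. If `v` is an entry of `x`, parking it first puts the long car on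
`[v, v + b)`; the short cars then fill the lot exactly, and since none of them straddles `v`
they fill the `v - 1` spots to its left `a` at a time, so `v = c t` for some `t`. If `H + 1`
entries are `≥ c u`, parking those cars first squeezes the long car and `H` short ones into the
last `b + (n - 1 - u) * a` spots, so at least `u` entries are `< c u`: this is `x_(u) ≤ c (u - 1)`.

Conversely, in any order the long car parks at its preference `c j`, and as `b > (n - 1) * a`
every preference lies before its end. The short cars fill the cells `[c u, c (u + 1))`, `u < j`,
like a classical parking function on `j` cells, and those finding no free cell line up behind
the long car; the bound on the order statistics keeps the free cells below every `u ≤ j` no more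
numerous than the cars still to come that prefer one of them, which leaves room behind.
-/

open Finset

theorem List.Pairwise.getElem_lt_iff_lt_countP {α : Type*} [LinearOrder α] {xs : List α}
    (hs : xs.Pairwise (· ≤ ·)) {i : ℕ} (hi : i < xs.length) (c : α) :
    xs[i] < c ↔ i < xs.countP (· < c) := by
  induction xs generalizing i with
  | nil => simp at hi
  | cons y ys ih =>
    rw [List.pairwise_cons] at hs
    by_cases hy : y < c
    · rw [List.countP_cons_of_pos (by simpa using hy)]
      cases i with
      | zero => simpa using hy
      | succ k => simpa using ih hs.2 (by simpa using hi)
    · have hge : ∀ z ∈ y :: ys, c ≤ z := by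
        intro z hz
        rcases List.mem_cons.1 hz with rfl | hz
        · exact not_lt.1 hy
        · exact (not_lt.1 hy).trans (hs.1 z hz)
      rw [List.countP_eq_zero.2 (by simpa using hge)]
      simpa using hge _ (List.getElem_mem hi)

theorem List.zip_replicate_of_length_eq {α β : Type*} {l : List α} {c : β} {n : ℕ}
    (h : l.length = n) : l.zip (List.replicate n c) = l.map fun p => (p, c) := by
  rw [List.map_prod_left_eq_zip, List.map_const', h]

section Park

variable {m : ℕ}

theorem ParksAt.eq_of_empty {pref len s : ℕ} (h : ParksAt ∅ m pref len s) :
    s = pref ∧ pref + len ≤ m + 1 := by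
  obtain ⟨⟨hps, hsm, -⟩, hmin⟩ := h
  have hs : s = pref := by
    by_contra hne
    exact hmin pref (by omega) ⟨le_rfl, by omega, by simp⟩
  exact ⟨hs, hs ▸ hsm⟩

theorem parksAt_of_fitsAt {occ : Finset ℕ} {pref len s : ℕ} (hlen : 0 < len)
    (hocc : Ico pref s ⊆ occ) (hfit : FitsAt occ m pref len s) :
    ParksAt occ m pref len s := by
  refine ⟨hfit, fun s' hs' hfit' => hfit'.2.2 s' ?_ (hocc ?_)⟩
  · exact mem_Ico.2 ⟨le_rfl, by omega⟩
  · exact mem_Ico.2 ⟨hfit'.1, hs'⟩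

theorem FitsAt.card_union {occ : Finset ℕ} {pref len s : ℕ} (h : FitsAt occ m pref len s) :
    (occ ∪ Ico s (s + len)).card = occ.card + len := by
  rw [card_union_of_disjoint (disjoint_right.2 h.2.2), Nat.card_Ico, Nat.add_sub_cancel_left]

theorem FitsAt.union_subset_Icc {occ : Finset ℕ} {p pref len s : ℕ}
    (h : FitsAt occ m pref len s) (hp : p ≤ pref) (hocc : occ ⊆ Icc p m) :
    occ ∪ Ico s (s + len) ⊆ Icc p m := by
  obtain ⟨hps, hsm, -⟩ := h
  refine union_subset hocc fun t ht => ?_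
  rw [mem_Ico] at ht
  rw [mem_Icc]
  omega

theorem Park.append_left {occ : Finset ℕ} {l₁ l₂ : List (ℕ × ℕ)}
    (h : Park m occ (l₁ ++ l₂)) : Park m occ l₁ := by
  induction l₁ generalizing occ with
  | nil => exact Park.nil occ
  | cons c l ih =>
    cases h with
    | cons _ _ _ _ s hs hrest => exact Park.cons _ _ _ _ s hs (ih hrest)

theorem Park.card_add_sum_le {p : ℕ} {occ : Finset ℕ} {l : List (ℕ × ℕ)}
    (h : Park m occ l) (hpref : ∀ c ∈ l, p ≤ c.1) (hocc : occ ⊆ Icc p m) :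
    occ.card + (l.map Prod.snd).sum ≤ m + 1 - p := by
  induction h with
  | nil occ => simpa using card_le_card hocc
  | cons occ pref len rest s hs _ ih =>
    have hp : p ≤ pref := hpref _ List.mem_cons_self
    have := ih (fun c hc => hpref c (List.mem_cons_of_mem _ hc))
      (hs.1.union_subset_Icc hp hocc)
    rw [hs.1.card_union] at this
    simp only [List.map_cons, List.sum_cons]
    omega

theorem Park.take {occ : Finset ℕ} {l : List (ℕ × ℕ)} (h : Park m occ l) (k : ℕ) :
    Park m occ (l.take k) :=
  (List.take_append_drop k l ▸ h).append_left

theorem card_Ico_inter_Ico_one_dvd {s len v : ℕ} (hs : 1 ≤ s) (hv : v ∉ Ico s (s + len)) :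
    len ∣ (Ico s (s + len) ∩ Ico 1 v).card := by
  rw [Ico_inter_Ico, Nat.card_Ico, mem_Ico] at *
  rcases le_or_gt (s + len) v with h | h
  · rw [show min (s + len) v - max s 1 = len by omega]
  · rw [show min (s + len) v - max s 1 = 0 by omega]
    exact dvd_zero len

/-- No car straddles the occupied spot `v`, so the spots below `v` fill up `a` at a time. -/
theorem Park.card_inter_Ico_modEq {a v : ℕ} {occ : Finset ℕ} {ps : List ℕ}
    (h : Park m occ (ps.map fun p => (p, a))) (hps : ∀ p ∈ ps, 1 ≤ p)
    (hocc : occ ⊆ Icc 1 m) (hv : v ∈ occ) (hfull : occ.card + ps.length * a = m) :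
    (occ ∩ Ico 1 v).card ≡ v - 1 [MOD a] := by
  induction ps generalizing occ with
  | nil =>
    have hocc' : occ = Icc 1 m :=
      eq_of_subset_of_card_le hocc (by simp at hfull; simp [hfull])
    have hvm := mem_Icc.1 (hocc hv)
    rw [hocc', inter_eq_right.2 (Ico_subset_Icc_self.trans (Icc_subset_Icc le_rfl (by omega))),
      Nat.card_Ico]
  | cons p ps ih =>
    cases h with
    | cons _ _ _ _ s hs hrest =>
      have hp : 1 ≤ p := hps p List.mem_cons_self
      have key := ih hrest (fun q hq => hps q (List.mem_cons_of_mem _ hq))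
        (hs.1.union_subset_Icc hp hocc) (mem_union_left _ hv)
        (by rw [hs.1.card_union]; simp only [List.length_cons] at hfull; linarith)
      obtain ⟨k, hk⟩ := card_Ico_inter_Ico_one_dvd (le_trans hp hs.1.1)
        (fun hvI => hs.1.2.2 v hvI hv)
      rwa [union_inter_distrib_right, card_union_of_disjoint
        ((disjoint_right.2 hs.1.2.2).mono inter_subset_left inter_subset_left), hk,
        Nat.ModEq, Nat.add_mul_mod_self_left] at key

end Park

theorem PA.sum_take_le {y x : List ℕ} (h : PA y x) {p k : ℕ} (hp : ∀ v ∈ x.take k, p ≤ v) :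
    (y.take k).sum ≤ y.sum + 1 - p := by
  obtain ⟨hlen, -, hpark⟩ := h
  have htake : (x.zip y).take k = (x.take k).zip (y.take k) := by
    rw [List.zip_eq_zipWith, List.take_zipWith, List.zip_eq_zipWith]
  have := (hpark.take k).card_add_sum_le (p := p) (fun c hc => ?_) (empty_subset _)
  · rwa [htake, List.map_snd_zip (by simp [hlen]), card_empty, zero_add] at this
  · rw [htake] at hc
    exact hp _ (List.of_mem_zip hc).1

section Cells

variable {a : ℕ}

def cell (a u : ℕ) : Finset ℕ := Ico (1 + u * a) (1 + u * a + a)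

theorem biUnion_Ico_cell {t u : ℕ} (htu : t ≤ u) :
    (Ico t u).biUnion (cell a) = Ico (1 + t * a) (1 + u * a) := by
  induction u, htu using Nat.le_induction with
  | base => simp
  | succ u htu ih =>
    rw [Nat.Ico_succ_right_eq_insert_Ico htu, biUnion_insert, ih, cell, union_comm,
      Ico_union_Ico_eq_Ico (by gcongr) (by omega), add_one_mul, add_assoc]

theorem biUnion_cell_subset {S : Finset ℕ} {j : ℕ} (hS : S ⊆ range j) :
    S.biUnion (cell a) ⊆ Ico 1 (1 + j * a) := by
  have := biUnion_Ico_cell (a := a) (Nat.zero_le j)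
  rw [zero_mul, add_zero, ← range_eq_Ico] at this
  exact this ▸ biUnion_subset_biUnion_of_subset_left (cell a) hS

theorem disjoint_cell_biUnion {S : Finset ℕ} {u : ℕ} (hu : u ∉ S) :
    Disjoint (cell a u) (S.biUnion (cell a)) := by
  refine (disjoint_biUnion_right _ _ _).2 fun w hw => disjoint_left.2 fun t htu htw => ?_
  simp only [cell, mem_Ico] at htu htw
  rcases lt_trichotomy u w with h | rfl | h
  · have : (u + 1) * a ≤ w * a := by gcongr; omega
    rw [add_one_mul] at this
    omega
  · exact hu hw
  · have : (w + 1) * a ≤ u * a := by gcongr; omega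
    rw [add_one_mul] at this
    omega

/-- The lot while the cars of length `a` park behind a car of length `b` standing at
`1 + j * a`: the cells `S` to its left are taken, and the `r` cars that found no free cell
there stand right behind it. -/
def occupied (a b j : ℕ) (S : Finset ℕ) (r : ℕ) : Finset ℕ :=
  S.biUnion (cell a) ∪ Ico (1 + j * a) (1 + j * a + b + r * a)

variable {b j m : ℕ} {S : Finset ℕ} {r : ℕ}

theorem parksAt_cell (ha : 0 < a) (hjm : j * a ≤ m) {t u : ℕ}
    (htu : t ≤ u) (huj : u < j) (hu : u ∉ S) (hcov : Ico t u ⊆ S) :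
    ParksAt (occupied a b j S r) m (1 + t * a) a (1 + u * a) := by
  have hu1 : (u + 1) * a ≤ j * a := by gcongr; omega
  rw [add_one_mul] at hu1
  refine parksAt_of_fitsAt ha ?_ ⟨by gcongr, by omega, ?_⟩
  · rw [← biUnion_Ico_cell htu]
    exact (biUnion_subset_biUnion_of_subset_left _ hcov).trans subset_union_left
  · intro w hw hocc
    rcases mem_union.1 hocc with h | h
    · exact disjoint_left.1 (disjoint_cell_biUnion hu) hw h
    · simp only [mem_Ico] at hw h
      omega

theorem occupied_union_cell {u : ℕ} :
    occupied a b j S r ∪ Ico (1 + u * a) (1 + u * a + a) = occupied a b j (insert u S) r := by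
  rw [occupied, occupied, biUnion_insert, cell]
  ac_rfl

theorem parksAt_behind (ha : 0 < a) (hS : S ⊆ range j) {t : ℕ} (hcov : Ico t j ⊆ S)
    (htb : t * a ≤ b) (hm : 1 + j * a + b + r * a + a ≤ m + 1) :
    ParksAt (occupied a b j S r) m (1 + t * a) a (1 + j * a + b + r * a) := by
  refine parksAt_of_fitsAt ha (fun w hw => ?_) ⟨by omega, hm, fun w hw hocc => ?_⟩
  · rw [mem_Ico] at hw
    rcases le_or_gt (1 + j * a) w with hjw | hwj
    · exact mem_union_right _ (mem_Ico.2 ⟨hjw, hw.2⟩)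
    · refine mem_union_left _ (biUnion_subset_biUnion_of_subset_left _ hcov ?_)
      rw [biUnion_Ico_cell (by by_contra! h; nlinarith)]
      exact mem_Ico.2 ⟨hw.1, hwj⟩
  · rw [mem_Ico] at hw
    rcases mem_union.1 hocc with h | h
    · have := mem_Ico.1 (biUnion_cell_subset hS h)
      omega
    · rw [mem_Ico] at h
      omega

theorem occupied_union_behind :
    occupied a b j S r ∪ Ico (1 + j * a + b + r * a) (1 + j * a + b + r * a + a) =
      occupied a b j S (r + 1) := by
  rw [occupied, occupied, union_assoc, Ico_union_Ico_eq_Ico (by omega) (by omega), add_mul,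
    one_mul, add_assoc _ (r * a)]

end Cells

section Simulation

theorem range_sdiff_eq_of_Ico_subset {S : Finset ℕ} {t u : ℕ} (htu : t ≤ u)
    (h : Ico t u ⊆ S) : range u \ S = range t \ S := by
  ext w
  simp only [mem_sdiff, mem_range]
  refine ⟨fun ⟨hw, hwS⟩ => ⟨?_, hwS⟩, fun ⟨hw, hwS⟩ => ⟨by omega, hwS⟩⟩
  by_contra! hwt
  exact hwS (h (mem_Ico.2 ⟨hwt, hw⟩))

/-- The parking-function condition for the cars `ts` still to come, relative to the cells
`S ⊆ range j` already taken: they suffice to fill the free cells below `j`. -/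
def Fillable (j : ℕ) (S : Finset ℕ) (ts : List ℕ) : Prop :=
  ∀ u ≤ j, (range u \ S).card ≤ ts.countP (· < u)

variable {j : ℕ} {S : Finset ℕ} {t : ℕ} {ts : List ℕ}

theorem Fillable.tail (h : Fillable j S (t :: ts)) {u : ℕ} (hu : u ≤ j) (hcov : Ico t u ⊆ S) :
    (range u \ S).card ≤ ts.countP (· < u) := by
  rcases le_or_gt u t with hut | htu
  · simpa [List.countP_cons, show ¬t < u by omega] using h u hu
  · rw [range_sdiff_eq_of_Ico_subset htu.le hcov]
    calc (range t \ S).card ≤ (t :: ts).countP (· < t) := h t (by omega)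
      _ = ts.countP (· < t) := by simp
      _ ≤ ts.countP (· < u) :=
        List.countP_mono_left fun w _ hw => by simp only [decide_eq_true_eq] at hw ⊢; omega

theorem Fillable.insert (h : Fillable j S (t :: ts)) {u₀ : ℕ} (htu : t ≤ u₀) (hu₀ : u₀ ∉ S)
    (hcov : Ico t u₀ ⊆ S) : Fillable j (insert u₀ S) ts := by
  intro u hu
  rcases le_or_gt u u₀ with huu | huu
  · rw [sdiff_insert, erase_eq_of_notMem (by simp; omega)]
    exact h.tail hu ((Ico_subset_Ico_right huu).trans hcov)
  · have hmem : u₀ ∈ range u \ S := by simp [huu, hu₀]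
    have := h u hu
    rw [List.countP_cons_of_pos (by simp; omega)] at this
    rw [sdiff_insert, card_erase_of_mem hmem]
    omega

theorem Fillable.skip (h : Fillable j S (t :: ts)) (hcov : Ico t j ⊆ S) : Fillable j S ts :=
  fun _ hu => h.tail hu ((Ico_subset_Ico_right hu).trans hcov)

theorem Fillable.le_card_add_length (h : Fillable j S ts) (hS : S ⊆ range j) :
    j ≤ S.card + ts.length := by
  have := h j le_rfl
  rw [card_sdiff_of_subset hS, card_range] at this
  have := ts.countP_le_length (p := (· < j))
  omega

variable {a b n : ℕ}

theorem park_occupied (ha : 0 < a) (hbig : (n - 1) * a < b) :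
    ∀ {ts : List ℕ} {S : Finset ℕ} {r : ℕ}, S ⊆ range j → S.card + r + ts.length = n - 1 →
      (∀ t ∈ ts, t < n) → Fillable j S ts →
      Park (b + (n - 1) * a) (occupied a b j S r) (ts.map fun t => (1 + t * a, a))
  | [], _, _, _, _, _, _ => Park.nil _
  | t :: ts, S, r, hS, hcard, hlt, hfill => by
    have hroom := hfill.le_card_add_length hS
    have htn : t * a ≤ (n - 1) * a := Nat.mul_le_mul_right _ (by have := hlt t (by simp); omega)
    simp only [List.length_cons] at hcard hroom
    rw [List.map_cons]
    by_cases hfree : ∃ u, t ≤ u ∧ u < j ∧ u ∉ S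
    · obtain ⟨htu, huj, hu⟩ := Nat.find_spec hfree
      have hcov : Ico t (Nat.find hfree) ⊆ S := fun w hw => by
        have hw := mem_Ico.1 hw
        by_contra hwS
        exact Nat.find_min hfree hw.2 ⟨hw.1, hw.2.trans huj, hwS⟩
      have hjm : j * a ≤ (n - 1) * a := Nat.mul_le_mul_right _ (by omega)
      refine Park.cons _ _ _ _ _ (parksAt_cell ha (by omega) htu huj hu hcov) ?_
      rw [occupied_union_cell]
      exact park_occupied ha hbig (insert_subset (mem_range.2 huj) hS)
        (by rw [card_insert_of_notMem hu]; omega) (fun t' ht' => hlt t' (by simp [ht']))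
        (hfill.insert htu hu hcov)
    · push Not at hfree
      have hcov : Ico t j ⊆ S := fun w hw => hfree w (mem_Ico.1 hw).1 (mem_Ico.1 hw).2
      have hjr : (j + r + 1) * a ≤ (n - 1) * a :=
        Nat.mul_le_mul_right _ (by have := (hfill.skip hcov).le_card_add_length hS; omega)
      rw [add_mul, add_mul, one_mul] at hjr
      refine Park.cons _ _ _ _ _ (parksAt_behind ha hS hcov (by omega) (by omega)) ?_
      rw [occupied_union_behind]
      exact park_occupied ha hbig hS (by omega) (fun t' ht' => hlt t' (by simp [ht']))
        (hfill.skip hcov)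

theorem park_of_cells (ha : 0 < a) (hbig : (n - 1) * a < b) {t₀ : ℕ} {ts : List ℕ}
    (hlen : ts.length = n - 1) (hlt : ∀ t ∈ t₀ :: ts, t < n)
    (hcount : ∀ u ≤ n, u ≤ (t₀ :: ts).countP (· < u)) :
    Park (b + (n - 1) * a) ∅ ((1 + t₀ * a, b) :: ts.map fun t => (1 + t * a, a)) := by
  have ht₀n := hlt t₀ List.mem_cons_self
  have ht₀ : t₀ * a ≤ (n - 1) * a := Nat.mul_le_mul_right _ (by omega)
  refine Park.cons _ _ _ _ _
    (parksAt_of_fitsAt (by omega) (by simp) ⟨le_rfl, by omega, by simp⟩) ?_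
  rw [empty_union, show Ico (1 + t₀ * a) (1 + t₀ * a + b) = occupied a b t₀ ∅ 0 by
    simp [occupied]]
  refine park_occupied ha hbig (empty_subset _) (by simpa using hlen)
    (fun t ht => hlt t (List.mem_cons_of_mem _ ht)) fun u hu => ?_
  exact Fillable.tail (fun u hu => by simpa using hcount u (by omega)) hu (by simp [hu])

end Simulation

section Assortment

variable {a b n : ℕ}

theorem sum_cons_replicate : (b :: List.replicate (n - 1) a).sum = b + (n - 1) * a := by
  simp [List.sum_replicate]

theorem exists_one_add_mul_eq_of_paInv (hb : 0 < b) {x : List ℕ}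
    (hinv : PAinv (b :: List.replicate (n - 1) a) x) {v : ℕ} (hv : v ∈ x) :
    ∃ t, 1 + t * a = v := by
  obtain ⟨hlen, hrange, hpark⟩ := hinv _ (List.perm_cons_erase hv)
  rw [sum_cons_replicate, List.zip_cons_cons] at hpark
  have hv1 := (hrange v List.mem_cons_self).1
  cases hpark with
  | cons _ _ _ _ s hs hrest =>
    obtain ⟨rfl, hvb⟩ := hs.eq_of_empty
    simp only [List.length_cons, List.length_replicate] at hlen
    have hlen' : (x.erase s).length = n - 1 := by omega
    rw [empty_union, List.zip_replicate_of_length_eq hlen'] at hrest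
    have key := hrest.card_inter_Ico_modEq (fun p hp => (hrange p (List.mem_cons_of_mem _ hp)).1)
      (fun w hw => by rw [mem_Ico] at hw; rw [mem_Icc]; omega) (mem_Ico.2 ⟨le_rfl, by omega⟩)
      (by rw [Nat.card_Ico, hlen']; omega)
    rw [disjoint_iff_inter_eq_empty.1 (Ico_disjoint_Ico_consecutive 1 s (s + b)).symm,
      card_empty] at key
    obtain ⟨t, ht⟩ := Nat.modEq_zero_iff_dvd.1 key.symm
    exact ⟨t, by rw [mul_comm]; omega⟩

theorem le_countP_of_paInv (ha : 0 < a) (hb : 0 < b) {x : List ℕ}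
    (hinv : PAinv (b :: List.replicate (n - 1) a) x) {u : ℕ} (hu : u ≤ n) :
    u ≤ x.countP (· < 1 + u * a) := by
  have hperm := List.filter_append_perm (fun v => decide (1 + u * a ≤ v)) x
  have hpa := hinv _ hperm.symm
  have hsplit := List.length_eq_countP_add_countP (fun v => decide (v < 1 + u * a)) (l := x)
  simp only [decide_eq_true_eq, not_lt] at hsplit
  have hlen := hpa.1
  simp only [hperm.length_eq, List.length_cons, List.length_replicate] at hlen
  obtain h0 | ⟨H, hH⟩ : x.countP (1 + u * a ≤ ·) = 0 ∨ ∃ H, x.countP (1 + u * a ≤ ·) = H + 1 := by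
    cases x.countP (1 + u * a ≤ ·) <;> simp
  · omega
  have hsum := hpa.sum_take_le (k := H + 1) (p := 1 + u * a) fun v hv => by
    rw [← hH, List.countP_eq_length_filter, List.take_left] at hv
    simpa using List.of_mem_filter hv
  rw [List.take_succ_cons, List.take_replicate, List.sum_cons, List.sum_replicate, smul_eq_mul,
    min_eq_left (by omega), sum_cons_replicate] at hsum
  have : (H + u) * a ≤ (n - 1) * a := by rw [add_mul]; omega
  have := Nat.le_of_mul_le_mul_right this ha
  omega

theorem pa_of_le_countP (ha : 0 < a) (hbig : (n - 1) * a < b) (hn : 1 ≤ n) {x : List ℕ}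
    (hlen : x.length = n) (hgrid : ∀ v ∈ x, ∃ t, 1 + t * a = v)
    (hcount : ∀ u ≤ n, u ≤ x.countP (· < 1 + u * a)) :
    PA (b :: List.replicate (n - 1) a) x := by
  obtain ⟨ts, rfl⟩ : x ∈ Set.range (List.map fun t => 1 + t * a) := by
    rw [Set.range_list_map]
    exact hgrid
  rw [List.length_map] at hlen
  replace hcount : ∀ u ≤ n, u ≤ ts.countP (· < u) := by
    simpa [List.countP_map, Function.comp_def, Nat.mul_lt_mul_right ha] using hcount
  have hlt : ∀ t ∈ ts, t < n := by
    have hall := hcount n le_rfl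
    rw [← hlen] at hall ⊢
    simpa using List.countP_eq_length.1 (le_antisymm List.countP_le_length hall)
  cases ts with
  | nil => simp at hlen; omega
  | cons t₀ ts =>
    simp only [List.length_cons] at hlen
    refine ⟨by simp; omega, fun v hv => ?_, ?_⟩
    · obtain ⟨t, ht, rfl⟩ := List.mem_map.1 hv
      have : t * a ≤ (n - 1) * a := Nat.mul_le_mul_right _ (by have := hlt t ht; omega)
      rw [sum_cons_replicate]
      omega
    · rw [sum_cons_replicate, List.map_cons, List.zip_cons_cons,
        List.zip_replicate_of_length_eq (by simp; omega), List.map_map]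
      exact park_of_cells ha hbig (by omega) hlt hcount

end Assortment

theorem forall_lt_exists_getD_eq_iff {a n : ℕ} (ha : 0 < a) {xs : List ℕ}
    (hs : xs.Pairwise (· ≤ ·)) (hlen : xs.length = n) :
    (∀ i < n, ∃ k, 1 ≤ k ∧ k ≤ i + 1 ∧ xs.getD i 0 = 1 + (k - 1) * a) ↔
      (∀ v ∈ xs, ∃ t, 1 + t * a = v) ∧ ∀ u ≤ n, u ≤ xs.countP (· < 1 + u * a) := by
  subst hlen
  constructor
  · intro h
    refine ⟨fun v hv => ?_, fun u hu => ?_⟩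
    · obtain ⟨i, hi, rfl⟩ := List.getElem_of_mem hv
      obtain ⟨k, -, -, hk⟩ := h i hi
      rw [List.getD_eq_getElem xs 0 hi] at hk
      exact ⟨k - 1, hk.symm⟩
    · obtain _ | i := u
      · exact Nat.zero_le _
      · obtain ⟨k, hk1, hki, hk⟩ := h i (by omega)
        rw [List.getD_eq_getElem xs 0 (by omega)] at hk
        have : (k - 1) * a < (i + 1) * a := Nat.mul_lt_mul_of_lt_of_le (by omega) le_rfl ha
        exact (hs.getElem_lt_iff_lt_countP (by omega) _).1 (by omega)
  · rintro ⟨hgrid, hcount⟩ i hi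
    obtain ⟨t, ht⟩ := hgrid _ (List.getElem_mem hi)
    have hlt := (hs.getElem_lt_iff_lt_countP hi _).2 (hcount (i + 1) hi)
    rw [← ht] at hlt
    have : t < i + 1 := Nat.lt_of_mul_lt_mul_right (a := a) (by omega)
    exact ⟨t + 1, by omega, by omega, by rw [List.getD_eq_getElem xs 0 hi, ← ht]; simp⟩

theorem stmt3_general (n a b : ℕ) (hn : 2 ≤ n) (ha : 0 < a) (hb : 0 < b)
    (y : List ℕ) (hy : y = b :: List.replicate (n - 1) a)
    (x : List ℕ) (hxlen : x.length = n)
    (xs : List ℕ) (hperm : xs.Perm x) (hsort : xs.Pairwise (· ≤ ·))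
    (hbig : (n - 1) * a < b) :
    PAinv y x ↔
      ∀ i < n, ∃ k, 1 ≤ k ∧ k ≤ i + 1 ∧ xs.getD i 0 = 1 + (k - 1) * a := by
  subst hy
  rw [forall_lt_exists_getD_eq_iff ha hsort (hperm.length_eq.trans hxlen)]
  simp only [hperm.mem_iff, hperm.countP_eq]
  refine ⟨fun hinv => ⟨fun v hv => exists_one_add_mul_eq_of_paInv hb hinv hv,
    fun u hu => le_countP_of_paInv ha hb hinv hu⟩, ?_⟩
  rintro ⟨hgrid, hcount⟩ x' hx'
  exact pa_of_le_countP ha hbig (by omega) (hx'.length_eq ▸ hxlen)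
    (fun v hv => hgrid v (hx'.mem_iff.2 hv)) fun u hu => hx'.countP_eq _ ▸ hcount u hu

/-- for `y = (b, a^{n−1})` with `b > (n−1)a`, `x ∈ PAinv_n(y)` iff for all
`i ∈ [n]` the `i`-th smallest entry of `x` is of the form `1 + (k−1)a` with `k ∈ [i]`.
Here `xs` is the nondecreasing rearrangement of `x` (0-based indexing). -/
theorem stmt3 (n a b : ℕ) (hn : 2 ≤ n) (ha : 0 < a) (hb : 0 < b)
    (y : List ℕ) (hy : y = b :: List.replicate (n - 1) a)
    (x : List ℕ) (hxlen : x.length = n)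
    (hxm : ∀ v ∈ x, 1 ≤ v ∧ v ≤ b + (n - 1) * a)
    (xs : List ℕ) (hperm : xs.Perm x) (hsort : xs.Pairwise (· ≤ ·))
    (hbig : (n - 1) * a < b) :
    PAinv y x ↔
      ∀ i < n, ∃ k, 1 ≤ k ∧ k ≤ i + 1 ∧ xs.getD i 0 = 1 + (k - 1) * a :=
  stmt3_general n a b hn ha hb y hy x hxlen xs hperm hsort hbig
end

section
/- Let y = (b, a, a, ..., a) ∈ ℕ^n with n ≥ 2, and let x = (x_1,...,x_n) ∈ [m]^n where m = b + (n−1)a. If x ∈ PAinv_n(y), then x_i ≡ 1 (mod a) for every i ∈ [n]. -/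
/-
Let `v` be any entry of `x`. Since `x` is invariant, the ordering with `v` first parks every car.
The long car enters an empty lot and occupies `[v, v + b)`; the remaining cars all have length `a`
and fill the rest of the lot exactly. None of their blocks contains `v`, so each lies entirely
before or entirely after it; hence the `v - 1` spots before `v` are tiled by blocks of length `a`.
-/

open Finset

theorem dvd_card_Ico_inter_Iio_of_notMem {a s v : ℕ} (hv : v ∉ Ico s (s + a)) :
    a ∣ #(Ico s (s + a) ∩ Iio v) := by
  rw [mem_Ico, not_and, not_lt] at hv
  rcases le_or_gt v s with hvs | hsv
  · have hempty : Ico s (s + a) ∩ Iio v = ∅ := by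
      ext t; simp only [mem_inter, mem_Ico, mem_Iio, notMem_empty, iff_false]; omega
    simp [hempty]
  · have hbefore : Ico s (s + a) ∩ Iio v = Ico s (s + a) :=
      inter_eq_left.mpr fun t ht => by simp only [mem_Ico, mem_Iio] at ht ⊢; omega
    simp [hbefore]

theorem ParksAt.eq_pref_of_empty {m pref len s : ℕ} (h : ParksAt ∅ m pref len s) :
    s = pref := by
  obtain ⟨⟨hps, hsm, -⟩, hmin⟩ := h
  by_contra hne
  exact hmin pref (lt_of_le_of_ne hps (Ne.symm hne)) ⟨le_rfl, by omega, by simp⟩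

theorem Park.card_inter_Iio_modEq {m a v : ℕ} {occ : Finset ℕ} {l : List (ℕ × ℕ)}
    (h : Park m occ l) (hl : ∀ p ∈ l, 1 ≤ p.1 ∧ p.2 = a) (hocc : occ ⊆ Icc 1 m)
    (hcard : #occ + l.length * a = m) (hv : v ∈ occ) :
    #(occ ∩ Iio v) ≡ v - 1 [MOD a] := by
  induction h with
  | nil occ =>
    have hfull : occ = Icc 1 m :=
      eq_of_subset_of_card_le hocc (by simp [← hcard])
    subst hfull
    have hvm : v ≤ m := (mem_Icc.mp hv).2
    have hbefore : Icc 1 m ∩ Iio v = Ico 1 v := by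
      ext t; simp only [mem_inter, mem_Icc, mem_Iio, mem_Ico]; omega
    rw [hbefore, Nat.card_Ico]
  | cons occ pref len rest s hparks _ ih =>
    obtain ⟨hpref, hlen : len = a⟩ := hl (pref, len) List.mem_cons_self
    subst len
    obtain ⟨⟨hps, hsm, hfree⟩, -⟩ := hparks
    have hdisj : Disjoint occ (Ico s (s + a)) := disjoint_right.mpr hfree
    have hblock : #(Ico s (s + a) ∩ Iio v) ≡ 0 [MOD a] :=
      Nat.modEq_zero_iff_dvd.mpr (dvd_card_Ico_inter_Iio_of_notMem fun h => hfree v h hv)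
    have hsplit : #((occ ∪ Ico s (s + a)) ∩ Iio v) =
        #(occ ∩ Iio v) + #(Ico s (s + a) ∩ Iio v) := by
      rw [union_inter_distrib_right, card_union_of_disjoint
        (hdisj.mono inter_subset_left inter_subset_left)]
    have hstep := ih (fun p hp => hl p (List.mem_cons_of_mem _ hp))
      (union_subset hocc fun t ht => by simp only [mem_Ico, mem_Icc] at ht ⊢; omega)
      (by rw [card_union_of_disjoint hdisj, Nat.card_Ico, Nat.add_sub_cancel_left, ← hcard,
        List.length_cons]; ring)
      (mem_union_left _ hv)
    rw [hsplit] at hstep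
    exact (Nat.ModEq.add_left _ hblock).symm.trans hstep

theorem stmt7_general (n a b : ℕ) (hb : 0 < b)
    (y : List ℕ) (hy : y = b :: List.replicate (n - 1) a)
    (x : List ℕ)
    (hx : PAinv y x) :
    ∀ v ∈ x, v ≡ 1 [MOD a] := by
  intro v hvx
  obtain ⟨hlen, hbound, hpark⟩ := hx _ (List.perm_cons_erase hvx)
  have hsum : y.sum = b + (n - 1) * a := by simp [hy, List.sum_replicate]
  subst hy
  rw [hsum] at hpark hbound
  have hv1 : 1 ≤ v := (hbound v List.mem_cons_self).1
  cases hpark with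
  | cons _ _ _ _ s hparks hrest =>
    obtain rfl := hparks.eq_pref_of_empty
    have hsm : s + b ≤ b + (n - 1) * a + 1 := hparks.1.2.1
    have herase : (x.erase s).length = n - 1 := by
      simpa only [List.length_cons, List.length_replicate, Nat.add_right_cancel_iff] using hlen
    rw [empty_union] at hrest
    have hmod := hrest.card_inter_Iio_modEq (v := s)
      (fun p hp => ⟨(hbound p.1 (List.mem_cons_of_mem _ (List.of_mem_zip hp).1)).1,
        List.eq_of_mem_replicate (List.of_mem_zip hp).2⟩)
      (fun t ht => by simp only [mem_Ico, mem_Icc] at ht ⊢; omega)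
      (by rw [Nat.card_Ico, List.length_zipWith, List.length_replicate, herase, min_self]; omega)
      (by simp only [mem_Ico]; omega)
    have hnone_before : Ico s (s + b) ∩ Iio s = ∅ := by
      ext t; simp only [mem_inter, mem_Ico, mem_Iio, notMem_empty, iff_false]; omega
    rw [hnone_before, card_empty] at hmod
    exact ((Nat.modEq_iff_dvd' hv1).mpr (Nat.modEq_zero_iff_dvd.mp hmod.symm)).symm

/-- for `y = (b, a^{n−1})`, if `x ∈ PAinv_n(y)` then every entry of `x`
is congruent to 1 modulo `a`. -/
theorem stmt7 (n a b : ℕ) (hn : 2 ≤ n) (ha : 0 < a) (hb : 0 < b)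
    (y : List ℕ) (hy : y = b :: List.replicate (n - 1) a)
    (x : List ℕ) (hxlen : x.length = n)
    (hxm : ∀ v ∈ x, 1 ≤ v ∧ v ≤ b + (n - 1) * a)
    (hx : PAinv y x) :
    ∀ v ∈ x, v ≡ 1 [MOD a] :=
  stmt7_general n a b hb y hy x hx
end
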